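/- Let μ > 0, R ∈ (0,1), G ≥ 1, τ > 0, and let (t_j) be an increasing sequence with t_0 = 0 and t_{j+1} - t_j ≥ τ for all j. Suppose a function V : ℝ₊ → ℝ₊ satisfies V(t) ≤ G²·exp(-2μ(1-R)(t - t_j))·V(t_j) for all j ≥ 0 and all t ∈ [t_j, t_{j+1}]. Then for all t ≥ 0, V(t) ≤ G²·exp(-(2μ(1-R) - 2·ln(G)/τ)·t)·V(0). -/

import Mathlib

open Set Real

theorem stmt_3 (μ R G τ : ℝ) (hμ : 0 < μ) (hR : 0 < R) (hR1 : R < 1)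
    (hG : 1 ≤ G) (hτ : 0 < τ)
    (t : ℕ → ℝ) (ht0 : t 0 = 0) (hmono : ∀ j : ℕ, t (j + 1) - t j ≥ τ)
    (V : ℝ → ℝ) (hVnn : ∀ s, 0 ≤ s → 0 ≤ V s)
    (hdec : ∀ j : ℕ, ∀ s ∈ Icc (t j) (t (j + 1)),
      V s ≤ G ^ 2 * Real.exp (-2 * μ * (1 - R) * (s - t j)) * V (t j)) :
    ∀ s : ℝ, 0 ≤ s →
      V s ≤ G ^ 2 * Real.exp (-(2 * μ * (1 - R) - 2 * Real.log G / τ) * s) * V 0 := by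
  have hG0 : (0:ℝ) < G := lt_of_lt_of_le one_pos hG
  have hlogG : 0 ≤ Real.log G := Real.log_nonneg hG
  set ν : ℝ := 2 * μ * (1 - R) with hν
  -- t j ≥ j * τ
  have htlb : ∀ j : ℕ, (j : ℝ) * τ ≤ t j := by
    intro j
    induction j with
    | zero => simp [ht0]
    | succ k ih =>
      have := hmono k
      push_cast
      linarith
  have ht0le : ∀ j : ℕ, 0 ≤ t j := fun j =>
    le_trans (by positivity) (htlb j)
  have htstep : ∀ j : ℕ, t j ≤ t (j + 1) := fun j => by
    have := hmono j; linarith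
  -- induction: V (t j) ≤ G^(2j) * exp(-ν * t j) * V 0
  have key : ∀ j : ℕ, V (t j) ≤ G ^ (2 * j) * Real.exp (-ν * t j) * V 0 := by
    intro j
    induction j with
    | zero => simp [ht0]
    | succ k ih =>
      have h1 := hdec k (t (k + 1)) ⟨htstep k, le_refl _⟩
      have hfac : 0 ≤ G ^ 2 * Real.exp (-2 * μ * (1 - R) * (t (k + 1) - t k)) := by
        positivity
      calc V (t (k + 1))
          ≤ G ^ 2 * Real.exp (-2 * μ * (1 - R) * (t (k + 1) - t k)) * V (t k) := h1
        _ ≤ G ^ 2 * Real.exp (-2 * μ * (1 - R) * (t (k + 1) - t k)) *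
              (G ^ (2 * k) * Real.exp (-ν * t k) * V 0) :=
            mul_le_mul_of_nonneg_left ih hfac
        _ = G ^ (2 * (k + 1)) * Real.exp (-ν * t (k + 1)) * V 0 := by
            have he : (-ν) * t (k + 1) =
                -2 * μ * (1 - R) * (t (k + 1) - t k) + (-ν) * t k := by
              rw [hν]; ring
            rw [he, Real.exp_add, show 2 * (k + 1) = 2 * k + 2 from by ring, pow_add]
            ring
  intro s hs
  -- find j with t j ≤ s < t (j+1)
  have hex : ∃ n : ℕ, s < t (n + 1) := by
    obtain ⟨n, hn⟩ := exists_nat_gt (s / τ)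
    refine ⟨n, lt_of_lt_of_le ?_ (htlb (n + 1))⟩
    have : s < n * τ := by
      rw [div_lt_iff₀ hτ] at hn; linarith
    have : ((n:ℝ)) * τ ≤ ((n:ℝ) + 1) * τ := by nlinarith
    push_cast
    linarith
  classical
  set j := Nat.find hex with hj
  have hjlt : s < t (j + 1) := Nat.find_spec hex
  have hjle : t j ≤ s := by
    cases' Nat.eq_zero_or_pos j with h h
    · rw [h, ht0]; exact hs
    · have := Nat.find_min hex (m := j - 1) (by omega)
      push_neg at this
      have hj1 : j - 1 + 1 = j := Nat.succ_pred_eq_of_pos h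
      rwa [hj1] at this
  have h1 := hdec j s ⟨hjle, le_of_lt hjlt⟩
  have h2 := key j
  have hfac : 0 ≤ G ^ 2 * Real.exp (-2 * μ * (1 - R) * (s - t j)) := by positivity
  have hmain : V s ≤ G ^ 2 * G ^ (2 * j) * Real.exp (-ν * s) * V 0 := by
    calc V s ≤ G ^ 2 * Real.exp (-2 * μ * (1 - R) * (s - t j)) * V (t j) := h1
      _ ≤ G ^ 2 * Real.exp (-2 * μ * (1 - R) * (s - t j)) *
            (G ^ (2 * j) * Real.exp (-ν * t j) * V 0) :=
          mul_le_mul_of_nonneg_left h2 hfac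
      _ = G ^ 2 * G ^ (2 * j) * (Real.exp (-2 * μ * (1 - R) * (s - t j)) *
            Real.exp (-ν * t j)) * V 0 := by ring
      _ = G ^ 2 * G ^ (2 * j) * Real.exp (-ν * s) * V 0 := by
          rw [← Real.exp_add, hν]; ring_nf
  -- bound G^(2j) ≤ exp(2 log G / τ * s)
  have hjτ : (j : ℝ) * τ ≤ s := le_trans (htlb j) hjle
  have hGj : G ^ (2 * j) ≤ Real.exp (2 * Real.log G / τ * s) := by
    have h1 : Real.exp (((2 * j : ℕ) : ℝ) * Real.log G) = G ^ (2 * j) := by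
      rw [Real.exp_nat_mul, Real.exp_log hG0]
    rw [← h1]
    apply Real.exp_le_exp.mpr
    have hjs : (j : ℝ) ≤ s / τ := (le_div_iff₀ hτ).mpr hjτ
    calc ((2 * j : ℕ) : ℝ) * Real.log G = 2 * (j:ℝ) * Real.log G := by push_cast; ring
      _ ≤ 2 * (s / τ) * Real.log G := by nlinarith
      _ = 2 * Real.log G / τ * s := by ring
  have hVnn0 : 0 ≤ V 0 := hVnn 0 le_rfl
  calc V s ≤ G ^ 2 * G ^ (2 * j) * Real.exp (-ν * s) * V 0 := hmain
    _ ≤ G ^ 2 * Real.exp (2 * Real.log G / τ * s) * Real.exp (-ν * s) * V 0 := by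
        apply mul_le_mul_of_nonneg_right _ hVnn0
        apply mul_le_mul_of_nonneg_right _ (Real.exp_pos _).le
        exact mul_le_mul_of_nonneg_left hGj (by positivity)
    _ = G ^ 2 * Real.exp (-(2 * μ * (1 - R) - 2 * Real.log G / τ) * s) * V 0 := by
        rw [mul_assoc (G^2), ← Real.exp_add, hν]
        ring_nf
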